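/- arXiv:1810.11158 — 6 statements merged into one kernel-verified Lean document; each statement's English description precedes it below -/
import Mathlib

section
/- For every x ∈ [0,1] and positive integer k, the tent map satisfies t_k(x) = σ(kx) + Σ_{i=1}^{k-1} 2(-1)^i σ(kx - i), where σ(y) = max(y, 0) is the ReLU function. -/
noncomputable def tent (k : ℕ) (x : ℝ) : ℝ :=
  if Even ⌊(k : ℝ) * x⌋ then (k : ℝ) * x - ⌊(k : ℝ) * x⌋
  else 1 - (k : ℝ) * x + ⌊(k : ℝ) * x⌋

/-!
Write `y = k x ∈ [0, k]`. Both sides are functions of `y` alone: the tent map is the triangle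
wave `w(y)`, and the right-hand side is a ReLU sum `S_k(y)`. On `[0, 1]` both equal `y`. For
`y ≥ 1` and `k ≥ 1`, shifting the summation index gives `S_{k+1}(y) = 1 - S_k(y - 1)`, while
the parity of `⌊y⌋` flips under `y ↦ y - 1`, so `w(y) = 1 - w(y - 1)`; induction on `k`
concludes.
-/

open Finset

noncomputable def triangleWave (y : ℝ) : ℝ :=
  if Even ⌊y⌋ then y - ⌊y⌋ else 1 - y + ⌊y⌋

noncomputable def reluSum (K : ℕ) (y : ℝ) : ℝ :=
  max y 0 + ∑ i ∈ Ico 1 K, 2 * (-1 : ℝ) ^ i * max (y - i) 0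

lemma triangleWave_of_mem_Icc {y : ℝ} (h0 : 0 ≤ y) (h1 : y ≤ 1) : triangleWave y = y := by
  rcases h1.lt_or_eq with hlt | rfl
  · have hfloor : ⌊y⌋ = 0 := Int.floor_eq_zero_iff.mpr ⟨h0, hlt⟩
    simp [triangleWave, hfloor]
  · simp [triangleWave]

lemma triangleWave_sub_one (y : ℝ) : triangleWave (y - 1) = 1 - triangleWave y := by
  unfold triangleWave
  by_cases h : Even ⌊y⌋ <;> simp only [Int.floor_sub_one, Int.even_sub_one, h, not_true,
    not_false_eq_true, if_true, if_false] <;> push_cast <;> ring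

lemma reluSum_of_mem_Icc (K : ℕ) {y : ℝ} (h0 : 0 ≤ y) (h1 : y ≤ 1) : reluSum K y = y := by
  have hterm : ∀ i ∈ Ico 1 K, 2 * (-1 : ℝ) ^ i * max (y - i) 0 = 0 := by
    intro i hi
    have hi1 : (1 : ℝ) ≤ i := by exact_mod_cast (mem_Ico.mp hi).1
    rw [max_eq_right (by linarith), mul_zero]
  rw [reluSum, sum_eq_zero hterm, max_eq_left h0, add_zero]

lemma reluSum_add_two {y : ℝ} (K : ℕ) (hy : 1 ≤ y) :
    reluSum (K + 2) y = 1 - reluSum (K + 1) (y - 1) := by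
  have hshift : ∀ i : ℕ, 2 * (-1 : ℝ) ^ (i + 1) * max (y - ↑(i + 1)) 0 =
      -(2 * (-1 : ℝ) ^ i * max (y - 1 - i) 0) := by
    intro i
    rw [Nat.cast_succ, sub_add_eq_sub_sub_swap, pow_succ]
    ring
  unfold reluSum
  rw [sum_eq_sum_Ico_succ_bot (by omega), ← sum_Ico_add', sum_congr rfl (fun i _ => hshift i),
    sum_neg_distrib, Nat.cast_one, max_eq_left (by linarith : 0 ≤ y),
    max_eq_left (by linarith : 0 ≤ y - 1)]
  ring

lemma triangleWave_eq_reluSum {K : ℕ} {y : ℝ} (h0 : 0 ≤ y) (hK : y ≤ K) :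
    triangleWave y = reluSum K y := by
  induction K generalizing y with
  | zero =>
    obtain rfl : y = 0 := le_antisymm (by simpa using hK) h0
    rw [triangleWave_of_mem_Icc le_rfl zero_le_one, reluSum_of_mem_Icc 0 le_rfl zero_le_one]
  | succ K ih =>
    rcases le_or_gt y 1 with hy1 | hy1
    · rw [triangleWave_of_mem_Icc h0 hy1, reluSum_of_mem_Icc _ h0 hy1]
    cases K with
    | zero => push_cast at hK; linarith
    | succ K =>
      have hprev := ih (y := y - 1) (by linarith) (by push_cast at hK ⊢; linarith)
      rw [reluSum_add_two K hy1.le, ← hprev, triangleWave_sub_one, sub_sub_cancel]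

theorem tent_eq_relu_sum_general (k : ℕ)
    (x : ℝ) (hx : x ∈ Set.Icc (0 : ℝ) 1) :
    tent k x = max ((k : ℝ) * x) 0 +
      ∑ i ∈ Finset.Ico 1 k, 2 * (-1 : ℝ) ^ i * max ((k : ℝ) * x - i) 0 :=
  triangleWave_eq_reluSum (mul_nonneg k.cast_nonneg hx.1)
    (mul_le_of_le_one_right k.cast_nonneg hx.2)

theorem tent_eq_relu_sum (k : ℕ) (hk : 0 < k)
    (x : ℝ) (hx : x ∈ Set.Icc (0 : ℝ) 1) :
    tent k x = max ((k : ℝ) * x) 0 +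
      ∑ i ∈ Finset.Ico 1 k, 2 * (-1 : ℝ) ^ i * max ((k : ℝ) * x - i) 0 :=
  tent_eq_relu_sum_general k x hx
end

section
/- A k-dimensional affine subspace P in ℝ^n intersects at most Σ_{j=0}^{k} C(n, j) of the 2^n open orthants of ℝ^n. -/
/-- The open orthant of `ℝⁿ` with sign pattern `ε` (`true` ↦ positive). -/
def orthant (n : ℕ) (ε : Fin n → Bool) : Set (EuclideanSpace ℝ (Fin n)) :=
  {x | ∀ i, if ε i then 0 < x i else x i < 0}

/-!
Regard the coordinates as affine functions `g₀, …, gₙ₋₁` on `P` and induct on their number.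
Forgetting the sign of `g₀` maps the realized sign patterns onto those of the remaining
functions, and a pattern has two preimages only if it is realized on both sides of the
hyperplane `{g₀ = 0}`; since sign regions are convex, it is then realized on that hyperplane,
whose dimension is one less. The resulting recursion is solved by Pascal's rule.
-/

open Finset

theorem sum_range_choose_succ (n k : ℕ) :
    ∑ j ∈ range (k + 1), (n + 1).choose j
      = ∑ j ∈ range (k + 1), n.choose j + ∑ j ∈ range k, n.choose j := by
  induction k with
  | zero => simp
  | succ k ih =>
    rw [sum_range_succ, ih, sum_range_succ (n := k + 1), sum_range_succ (n := k),
      Nat.choose_succ_succ']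
    ring

theorem Finset.card_eq_sum_card_cons {n : ℕ} {α : Type*} [Fintype α] [DecidableEq α]
    (S : Finset (Fin (n + 1) → α)) :
    #S = ∑ a, #{ε : Fin n → α | (Fin.cons a ε : Fin (n + 1) → α) ∈ S} := by
  rw [card_eq_sum_card_fiberwise (f := fun ε => ε 0) (t := univ) (fun _ _ => mem_univ _)]
  refine sum_congr rfl fun a _ => ?_
  refine card_nbij' Fin.tail (fun ε => Fin.cons a ε) ?_ ?_ ?_ ?_
  · intro ε hε
    obtain ⟨hεS, rfl⟩ := mem_filter.mp hε
    simpa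
  · intro ε hε
    simp_all
  · intro ε hε
    obtain ⟨-, rfl⟩ := mem_filter.mp hε
    simp
  · intro ε _
    simp

section SignPatterns

variable {ι X : Type*}

def HasSignPattern (ε : ι → Bool) (y : ι → ℝ) : Prop :=
  ∀ i, if ε i then 0 < y i else y i < 0

theorem convex_hasSignPattern (ε : ι → Bool) : Convex ℝ {y | HasSignPattern ε y} := by
  simp only [HasSignPattern, Set.ofPred_forall]
  refine convex_iInter fun i => ?_
  cases ε i
  · exact (convex_Iio 0).is_linear_preimage (LinearMap.proj i).isLinear
  · exact (convex_Ioi 0).is_linear_preimage (LinearMap.proj i).isLinear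

open scoped Classical in
noncomputable def signPatterns [Fintype ι] (g : ι → X → ℝ) : Finset (ι → Bool) :=
  {ε | ∃ x, HasSignPattern ε fun i => g i x}

@[simp]
theorem mem_signPatterns [Fintype ι] {g : ι → X → ℝ} {ε : ι → Bool} :
    ε ∈ signPatterns g ↔ ∃ x, HasSignPattern ε fun i => g i x := by
  simp [signPatterns]

theorem hasSignPattern_cons_iff {n : ℕ} {b : Bool} {ε : Fin n → Bool} {y : Fin (n + 1) → ℝ} :
    HasSignPattern (Fin.cons b ε : Fin (n + 1) → Bool) y ↔
      (if b then 0 < y 0 else y 0 < 0) ∧ HasSignPattern ε (Fin.tail y) := by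
  simp only [HasSignPattern, Fin.forall_fin_succ, Fin.cons_zero, Fin.cons_succ, Fin.tail]

theorem cons_mem_signPatterns_iff {n : ℕ} {g : Fin (n + 1) → X → ℝ} {b : Bool}
    {ε : Fin n → Bool} :
    (Fin.cons b ε : Fin (n + 1) → Bool) ∈ signPatterns g ↔
      ∃ x, (if b then 0 < g 0 x else g 0 x < 0) ∧ HasSignPattern ε fun i => g i.succ x := by
  simp only [mem_signPatterns, hasSignPattern_cons_iff]
  rfl

end SignPatterns

theorem AffineMap.mem_mk'_ker_iff {k V P V₂ P₂ : Type*} [Ring k] [AddCommGroup V] [Module k V]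
    [AddCommGroup V₂] [Module k V₂] [AddTorsor V P] [AddTorsor V₂ P₂] (f : P →ᵃ[k] P₂) (p q : P) :
    q ∈ AffineSubspace.mk' p (LinearMap.ker f.linear) ↔ f q = f p := by
  rw [AffineSubspace.mem_mk', LinearMap.mem_ker, AffineMap.linearMap_vsub, vsub_eq_zero_iff_eq]

section Affine

variable {ι V P : Type*} [AddCommGroup V] [Module ℝ V] [AddTorsor V P]

theorem exists_eq_zero_hasSignPattern {g : ι → P →ᵃ[ℝ] ℝ} {f : P →ᵃ[ℝ] ℝ} {ε : ι → Bool}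
    {v w : P} (hv : HasSignPattern ε fun i => g i v) (hw : HasSignPattern ε fun i => g i w)
    (hfv : 0 < f v) (hfw : f w < 0) :
    ∃ p, f p = 0 ∧ HasSignPattern ε fun i => g i p := by
  have hfvw : 0 < f v - f w := by linarith
  set t := f v / (f v - f w) with ht_def
  have ht : t ∈ Set.Icc (0 : ℝ) 1 :=
    ⟨div_nonneg hfv.le hfvw.le, (div_le_one hfvw).mpr (by linarith)⟩
  refine ⟨AffineMap.lineMap v w t, ?_, ?_⟩
  · rw [AffineMap.apply_lineMap, AffineMap.lineMap_apply_ring', ht_def]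
    field_simp
    ring
  · have hline : (fun i => g i (AffineMap.lineMap v w t)) =
        AffineMap.lineMap (fun i => g i v) (fun i => g i w) t :=
      (AffineMap.pi g).apply_lineMap v w t
    rw [hline]
    exact (convex_hasSignPattern ε).lineMap_mem hv hw ht

theorem exists_eq_zero_of_cons_mem_signPatterns {n : ℕ} {g : Fin (n + 1) → P →ᵃ[ℝ] ℝ}
    {ε : Fin n → Bool} (hpos : (Fin.cons true ε : Fin (n + 1) → Bool) ∈ signPatterns fun i => g i)
    (hneg : (Fin.cons false ε : Fin (n + 1) → Bool) ∈ signPatterns fun i => g i) :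
    (g 0).linear ≠ 0 ∧ ∃ p, g 0 p = 0 ∧ HasSignPattern ε fun i => g i.succ p := by
  obtain ⟨v, hv0, hv⟩ := cons_mem_signPatterns_iff.mp hpos
  obtain ⟨w, hw0, hw⟩ := cons_mem_signPatterns_iff.mp hneg
  simp only [if_true, Bool.false_eq_true, if_false] at hv0 hw0
  refine ⟨fun hzero => ?_, exists_eq_zero_hasSignPattern hv hw hv0 hw0⟩
  have hvw := (g 0).linearMap_vsub v w
  rw [hzero, LinearMap.zero_apply, vsub_eq_sub] at hvw
  linarith

theorem card_signPatterns_le [FiniteDimensional ℝ V] (n : ℕ) (g : Fin n → P →ᵃ[ℝ] ℝ) :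
    #(signPatterns fun i => g i) ≤ ∑ j ∈ range (Module.finrank ℝ V + 1), n.choose j := by
  induction n generalizing V P with
  | zero =>
    calc #(signPatterns fun i => g i) ≤ #(univ : Finset (Fin 0 → Bool)) := card_le_univ _
      _ = (0 : ℕ).choose 0 := by simp
      _ ≤ _ := single_le_sum (fun _ _ => Nat.zero_le _) (by simp)
  | succ n ih =>
    set S := signPatterns fun i => g i
    set A : Finset (Fin n → Bool) := {ε | (Fin.cons true ε : Fin (n + 1) → Bool) ∈ S}
    set B : Finset (Fin n → Bool) := {ε | (Fin.cons false ε : Fin (n + 1) → Bool) ∈ S}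
    have hunion : A ∪ B ⊆ signPatterns fun i => g i.succ := by
      intro ε hε
      simp only [A, B, S, mem_union, mem_filter, mem_univ, true_and,
        cons_mem_signPatterns_iff] at hε
      obtain ⟨x, -, hx⟩ | ⟨x, -, hx⟩ := hε <;> exact mem_signPatterns.mpr ⟨x, hx⟩
    have hinter : #(A ∩ B) ≤ ∑ j ∈ range (Module.finrank ℝ V), n.choose j := by
      rcases (A ∩ B).eq_empty_or_nonempty with hempty | ⟨ε, hε⟩
      · simp [hempty]
      simp only [A, B, mem_inter, mem_filter, mem_univ, true_and] at hε
      obtain ⟨hlin, p, hp0, -⟩ := exists_eq_zero_of_cons_mem_signPatterns hε.1 hε.2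
      set H := AffineSubspace.mk' p (LinearMap.ker (g 0).linear)
      have : Nonempty H := ⟨⟨p, AffineSubspace.self_mem_mk' _ _⟩⟩
      have hdim : Module.finrank ℝ H.direction + 1 = Module.finrank ℝ V := by
        rw [AffineSubspace.direction_mk']
        exact Module.Dual.finrank_ker_add_one_of_ne_zero hlin
      have hsub : A ∩ B ⊆ signPatterns fun i => (g i.succ).comp H.subtype := by
        intro ε hε
        simp only [A, B, mem_inter, mem_filter, mem_univ, true_and] at hε
        obtain ⟨-, q, hq0, hq⟩ := exists_eq_zero_of_cons_mem_signPatterns hε.1 hε.2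
        have hqH : q ∈ H := ((g 0).mem_mk'_ker_iff p q).mpr (hq0.trans hp0.symm)
        exact mem_signPatterns.mpr ⟨⟨q, hqH⟩, hq⟩
      rw [← hdim]
      exact (card_le_card hsub).trans (ih _)
    calc #S = #A + #B := by rw [card_eq_sum_card_cons, Fintype.sum_bool]
      _ = #(A ∪ B) + #(A ∩ B) := (card_union_add_card_inter _ _).symm
      _ ≤ _ := add_le_add ((card_le_card hunion).trans (ih _)) hinter
      _ = _ := (sum_range_choose_succ _ _).symm

end Affine

open scoped Classical in
theorem affine_subspace_orthant_count (n k : ℕ)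
    (P : AffineSubspace ℝ (EuclideanSpace ℝ (Fin n)))
    (hP : (P : Set (EuclideanSpace ℝ (Fin n))).Nonempty)
    (hdim : Module.finrank ℝ P.direction = k) :
    (Finset.univ.filter
        (fun ε : Fin n → Bool =>
          ((P : Set (EuclideanSpace ℝ (Fin n))) ∩ orthant n ε).Nonempty)).card
      ≤ ∑ j ∈ Finset.range (k + 1), n.choose j := by
  have : Nonempty P := hP.to_subtype
  let coord : Fin n → P →ᵃ[ℝ] ℝ := fun i =>
    (EuclideanSpace.proj i).toLinearMap.toAffineMap.comp P.subtype
  calc _ ≤ #(signPatterns fun i => coord i) := card_le_card fun ε hε => by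
        obtain ⟨x, hxP, hx⟩ := (mem_filter.mp hε).2
        exact mem_signPatterns.mpr ⟨⟨x, hxP⟩, hx⟩
    _ ≤ _ := hdim ▸ card_signPatterns_le n coord
end

section
/- For any total node count N, input dimension n₀, and depth L, the bound Π_{i=1}^{L} (Σ_{j=0}^{n₀} C(n_i, j)) with Σ n_i ≤ N is at most (e·N/(n₀L) + e)^{n₀L}. -/
/-!
Bound each factor by `∑_{j ≤ n₀} C(nᵢ, j) ≤ C(nᵢ + n₀, n₀)`. By Vandermonde's identity a product
of binomial coefficients is at most the binomial coefficient of the sums, so the whole product is at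
most `C(N + K, K)` with `K = n₀ L`, and `C(m, k) ≤ (e m / k)^k` finishes. This bypasses the AM-GM
step: merging the factors into one binomial coefficient already accounts for the worst case.
-/

open Finset

namespace Nat

theorem sum_range_succ_choose_le_add_choose (n k : ℕ) :
    ∑ j ∈ range (k + 1), n.choose j ≤ (n + k).choose k := by
  rw [add_choose_eq, Finset.Nat.sum_antidiagonal_eq_sum_range_succ_mk]
  exact sum_le_sum fun i _ => Nat.le_mul_of_pos_right _ (choose_pos (sub_le k i))

theorem choose_mul_choose_le_add_choose (a b c d : ℕ) :
    a.choose b * c.choose d ≤ (a + c).choose (b + d) := by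
  rw [add_choose_eq]
  exact single_le_sum (f := fun ij : ℕ × ℕ => a.choose ij.1 * c.choose ij.2)
    (fun _ _ => Nat.zero_le _) (mem_antidiagonal.mpr rfl : (b, d) ∈ antidiagonal (b + d))

end Nat

theorem Finset.prod_choose_le_choose_sum {ι : Type*} (s : Finset ι) (a b : ι → ℕ) :
    ∏ i ∈ s, (a i).choose (b i) ≤ (∑ i ∈ s, a i).choose (∑ i ∈ s, b i) := by
  induction s using Finset.cons_induction with
  | empty => simp
  | cons x s _ ih =>
    rw [prod_cons, sum_cons, sum_cons]
    exact (Nat.mul_le_mul_left _ ih).trans (Nat.choose_mul_choose_le_add_choose _ _ _ _)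

namespace Real

theorem choose_le_exp_one_mul_div_pow (m k : ℕ) :
    (m.choose k : ℝ) ≤ (exp 1 * m / k) ^ k := by
  rcases k.eq_zero_or_pos with rfl | hk
  · simp
  have hk' : (0 : ℝ) < k := by exact_mod_cast hk
  -- `k^k / k! ≤ e^k` is a single term of the series of `exp k`.
  have hpow : (k : ℝ) ^ k / k.factorial ≤ exp 1 ^ k := by
    rw [← exp_nat_mul, mul_one]
    exact pow_div_factorial_le_exp _ hk'.le k
  calc (m.choose k : ℝ) ≤ (m : ℝ) ^ k / k.factorial := Nat.choose_le_pow_div k m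
    _ = (m / k : ℝ) ^ k * ((k : ℝ) ^ k / k.factorial) := by
        rw [mul_div_assoc', ← mul_pow, div_mul_cancel₀ _ hk'.ne']
    _ ≤ (m / k : ℝ) ^ k * exp 1 ^ k := by gcongr
    _ = (exp 1 * m / k) ^ k := by ring

theorem add_choose_le_exp_one_mul_div_add_pow (N K : ℕ) :
    ((N + K).choose K : ℝ) ≤ (exp 1 * N / K + exp 1) ^ K := by
  rcases K.eq_zero_or_pos with rfl | hK
  · simp
  have hK' : (K : ℝ) ≠ 0 := by positivity
  convert choose_le_exp_one_mul_div_pow (N + K) K using 2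
  field_simp
  push_cast
  ring

end Real

theorem pieces_bound_total_general (N n₀ L : ℕ)
    (n : Fin L → ℕ) (hN : ∑ i, n i ≤ N) :
    ((∏ i, ∑ j ∈ Finset.range (n₀ + 1), (n i).choose j : ℕ) : ℝ)
      ≤ (Real.exp 1 * N / (n₀ * L) + Real.exp 1) ^ (n₀ * L) := by
  have hprod : ∏ i, ∑ j ∈ range (n₀ + 1), (n i).choose j ≤ (N + n₀ * L).choose (n₀ * L) :=
    calc ∏ i, ∑ j ∈ range (n₀ + 1), (n i).choose j
        ≤ ∏ i, (n i + n₀).choose n₀ :=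
          prod_le_prod' fun i _ => Nat.sum_range_succ_choose_le_add_choose (n i) n₀
      _ ≤ (∑ i, (n i + n₀)).choose (∑ _i : Fin L, n₀) := prod_choose_le_choose_sum _ _ _
      _ = (∑ i, n i + n₀ * L).choose (n₀ * L) := by
          simp [sum_add_distrib, mul_comm]
      _ ≤ (N + n₀ * L).choose (n₀ * L) := Nat.choose_le_choose _ (by omega)
  calc ((∏ i, ∑ j ∈ range (n₀ + 1), (n i).choose j : ℕ) : ℝ)
      ≤ ((N + n₀ * L).choose (n₀ * L) : ℝ) := by exact_mod_cast hprod
    _ ≤ _ := by exact_mod_cast Real.add_choose_le_exp_one_mul_div_add_pow N (n₀ * L)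

theorem pieces_bound_total (N n₀ L : ℕ) (hn₀ : 0 < n₀) (hL : 0 < L)
    (n : Fin L → ℕ) (hN : ∑ i, n i ≤ N) :
    ((∏ i, ∑ j ∈ Finset.range (n₀ + 1), (n i).choose j : ℕ) : ℝ)
      ≤ (Real.exp 1 * N / (n₀ * L) + Real.exp 1) ^ (n₀ * L) :=
  pieces_bound_total_general N n₀ L n hN
end

section
/- Let B ⊆ B₀ ⊆ ℝ^d where B₀ is a ball of radius l, B is measurable with Lebesgue measure m(B) > 0, and let S be an n-dimensional affine subspace of ℝ^d with 0 ≤ n < d. Then ∫_B d(x, S) dx / m(B) ≥ ((d−n)/(d−n+1)) · (Γ((d−n)/2 + 1)·Γ(n/2 + 1) / π^{d/2} · l^{−n} · m(B))^{1/(d−n)}. -/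
/-!
Write `k = d - n` and `V` for the direction of `S`. Projecting onto `V` and `Vᗮ` (a measure-preserving
splitting of `ℝ^d`), the part of `B` within distance `t` of `S` lies in the cylinder
`(n-ball of radius l) × (k-ball of radius t)`, so its measure is at most `C t^k` with
`C = ω_n l^n ω_k`, where `ω_j` is the volume of the unit `j`-ball. Hence `m{x ∈ B | d(x,S) > t}`
is at least `m(B) - C t^k`, and integrating this over `0 < t < T`, where `C T^k = m(B)`, gives the
layer-cake bound `∫_B d(x,S) dx ≥ k/(k+1) · T · m(B)`.
-/

open MeasureTheory Metric Set Module

noncomputable def unitBallVolume (n : ℕ) : ℝ :=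
  √Real.pi ^ n / Real.Gamma (n / 2 + 1)

theorem unitBallVolume_pos (n : ℕ) : 0 < unitBallVolume n := by
  have := Real.Gamma_pos_of_pos (s := (n : ℝ) / 2 + 1) (by positivity)
  have := Real.sqrt_pos.2 Real.pi_pos
  unfold unitBallVolume
  positivity

theorem inv_unitBallVolume_mul_unitBallVolume (n k : ℕ) :
    (unitBallVolume n * unitBallVolume k)⁻¹ =
      Real.Gamma (k / 2 + 1) * Real.Gamma (n / 2 + 1) / Real.pi ^ (((n + k : ℕ) : ℝ) / 2) := by
  rw [unitBallVolume, unitBallVolume, Real.rpow_div_two_eq_sqrt _ Real.pi_pos.le,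
    Real.rpow_natCast, pow_add]
  simp only [div_eq_mul_inv, mul_inv, inv_inv]
  ring

theorem mul_le_integral_of_measure_le_mul_rpow {α : Type*} [MeasurableSpace α] (μ : Measure α)
    [IsFiniteMeasure μ] {f : α → ℝ} (hf : 0 ≤ᵐ[μ] f) (hfi : Integrable f μ) {C p : ℝ}
    (hC : 0 < C) (hp : 0 < p) (hμ : ∀ t, 0 < t → μ {x | f x ≤ t} ≤ ENNReal.ofReal (C * t ^ p)) :
    p / (p + 1) * (μ.real univ / C) ^ (1 / p) * μ.real univ ≤ ∫ x, f x ∂μ := by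
  set m := μ.real univ
  set T := (m / C) ^ (1 / p)
  have hT : 0 ≤ T := by positivity
  have hCT : C * T ^ p = m := by
    rw [← Real.rpow_mul (by positivity), one_div_mul_cancel hp.ne', Real.rpow_one,
      mul_div_cancel₀ _ hC.ne']
  have hsuper : ∀ t ∈ Ioc 0 T, ENNReal.ofReal (m - C * t ^ p) ≤ μ {x | t < f x} := by
    intro t ht
    have hcover : μ univ ≤ μ {x | t < f x} + μ {x | f x ≤ t} :=
      (measure_mono fun x _ => lt_or_ge t (f x)).trans (measure_union_le _ _)
    rw [ENNReal.ofReal_sub _ (by have := ht.1.le; positivity),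
      ofReal_measureReal (measure_ne_top _ _)]
    exact tsub_le_iff_right.2 (hcover.trans (by gcongr; exact hμ t ht.1))
  have hnonneg : ∀ t ∈ Ioc 0 T, 0 ≤ m - C * t ^ p := fun t ht => by
    rw [sub_nonneg, ← hCT]
    gcongr
    exacts [ht.1.le, ht.2]
  have hpow : IntervalIntegrable (fun t : ℝ => C * t ^ p) volume 0 T :=
    (intervalIntegral.intervalIntegrable_rpow' (by linarith)).const_mul C
  have hprofile : ∫ t in (0)..T, (m - C * t ^ p) = p / (p + 1) * T * m := by
    rw [intervalIntegral.integral_sub intervalIntegrable_const hpow,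
      intervalIntegral.integral_const, intervalIntegral.integral_const_mul,
      integral_rpow (Or.inl (by linarith)), Real.zero_rpow (by linarith),
      Real.rpow_add_one' hT (by linarith), sub_zero, sub_zero, smul_eq_mul,
      ← mul_div_assoc, ← mul_assoc, hCT]
    field_simp
    ring
  refine (ENNReal.ofReal_le_ofReal_iff (integral_nonneg_of_ae hf)).1 ?_
  calc ENNReal.ofReal (p / (p + 1) * T * m)
      = ∫⁻ t in Ioc 0 T, ENNReal.ofReal (m - C * t ^ p) := by
        rw [← hprofile, intervalIntegral.integral_of_le hT,
          ofReal_integral_eq_lintegral_ofReal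
            ((intervalIntegrable_iff_integrableOn_Ioc_of_le hT).1
              (intervalIntegrable_const.sub hpow))
            (ae_restrict_of_forall_mem measurableSet_Ioc hnonneg)]
    _ ≤ ∫⁻ t in Ioc 0 T, μ {x | t < f x} := setLIntegral_mono' measurableSet_Ioc hsuper
    _ ≤ ∫⁻ t in Ioi 0, μ {x | t < f x} := lintegral_mono_set Ioc_subset_Ioi_self
    _ = ENNReal.ofReal (∫ x, f x ∂μ) := by
        rw [← lintegral_eq_lintegral_meas_lt μ hf hfi.aemeasurable,
          ofReal_integral_eq_lintegral_ofReal hfi hf]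

section InnerProductSpace

variable {E : Type*} [NormedAddCommGroup E] [InnerProductSpace ℝ E] [FiniteDimensional ℝ E]

theorem norm_orthogonalProjectionOnto_orthogonal_sub_le_infDist (S : AffineSubspace ℝ E)
    {p : E} (hp : p ∈ S) (x : E) :
    ‖S.directionᗮ.orthogonalProjectionOnto (x - p)‖ ≤ infDist x S := by
  refine (le_infDist ⟨p, hp⟩).2 fun y hy => ?_
  have hyp : y - p ∈ S.direction := AffineSubspace.vsub_mem_direction hy hp
  calc ‖S.directionᗮ.orthogonalProjectionOnto (x - p)‖
      = ‖S.directionᗮ.orthogonalProjectionOnto (x - y)‖ := by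
        rw [← sub_add_sub_cancel x y p, map_add,
          Submodule.orthogonalProjectionOnto_orthogonal_apply_eq_zero hyp, add_zero]
    _ ≤ dist x y := by
        rw [dist_eq_norm]
        exact Submodule.norm_orthogonalProjectionOnto_apply_le _ _

variable [MeasurableSpace E] [BorelSpace E]

/-- Unlike `InnerProductSpace.volume_closedBall`, this also covers the zero-dimensional space. -/
theorem InnerProductSpace.volume_closedBall_le (x : E) {r : ℝ} (hr : 0 ≤ r) :
    volume (closedBall x r) ≤ ENNReal.ofReal (unitBallVolume (finrank ℝ E) * r ^ finrank ℝ E) := by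
  rw [ENNReal.ofReal_mul (unitBallVolume_pos _).le, ENNReal.ofReal_pow hr, mul_comm]
  cases subsingleton_or_nontrivial E with
  | inr _ => exact (InnerProductSpace.volume_closedBall x r).le
  | inl _ =>
    have : IsEmpty (Fin (finrank ℝ E)) := by rw [finrank_zero_of_subsingleton]; infer_instance
    have hvol := (stdOrthonormalBasis ℝ E).measurePreserving_repr_symm.measure_preimage
      (s := univ) MeasurableSet.univ.nullMeasurableSet
    rw [preimage_univ, volume_euclideanSpace_eq_dirac] at hvol
    calc volume (closedBall x r) ≤ volume (univ : Set E) := measure_mono (subset_univ _)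
      _ = 1 := by simpa using hvol.symm
      _ = _ := by simp [unitBallVolume, finrank_zero_of_subsingleton, Real.Gamma_one]

theorem volume_inter_infDist_le (S : AffineSubspace ℝ E) {p : E} (hp : p ∈ S) {B : Set E}
    {x₀ : E} {l : ℝ} (hB : B ⊆ closedBall x₀ l) (hl : 0 ≤ l) {t : ℝ} (ht : 0 ≤ t) :
    volume (B ∩ {x | infDist x S ≤ t}) ≤
      ENNReal.ofReal (unitBallVolume (finrank ℝ S.direction) * l ^ finrank ℝ S.direction *
        (unitBallVolume (finrank ℝ S.directionᗮ) * t ^ finrank ℝ S.directionᗮ)) := by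
  have hsplit := S.direction.measurePreserving_measurableEquivProd p
  rw [InnerProductSpace.euclideanHausdorffMeasure_eq_volume] at hsplit
  set c := S.direction.orthogonalProjectionOnto (x₀ - p)
  calc volume (B ∩ {x | infDist x S ≤ t})
      ≤ volume (S.direction.measurableEquivProd p ⁻¹' (closedBall c l ×ˢ closedBall 0 t)) := by
        refine measure_mono fun x ⟨hxB, hxS⟩ => ⟨?_, ?_⟩
        · rw [Submodule.measurableEquivProd_apply, mem_closedBall, dist_eq_norm, vsub_eq_sub,
            ← map_sub, sub_sub_sub_cancel_right]
          exact (Submodule.norm_orthogonalProjectionOnto_apply_le _ _).trans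
            (mem_closedBall_iff_norm.1 (hB hxB))
        · rw [Submodule.measurableEquivProd_apply, mem_closedBall_zero_iff, vsub_eq_sub]
          exact (norm_orthogonalProjectionOnto_orthogonal_sub_le_infDist S hp x).trans hxS
    _ = volume (closedBall c l) * volume (closedBall (0 : S.directionᗮ) t) := by
        rw [hsplit.measure_preimage_equiv, Measure.volume_eq_prod, Measure.prod_prod]
    _ ≤ _ := by
        rw [ENNReal.ofReal_mul (by have := unitBallVolume_pos (finrank ℝ S.direction); positivity)]
        exact mul_le_mul' (InnerProductSpace.volume_closedBall_le _ hl)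
          (InnerProductSpace.volume_closedBall_le _ ht)

end InnerProductSpace

theorem plane_distance_lower_bound_general (d n : ℕ) (hn : n < d)
    (l : ℝ) (hl : 0 < l) (x₀ : EuclideanSpace ℝ (Fin d))
    (B : Set (EuclideanSpace ℝ (Fin d)))
    (hBsub : B ⊆ Metric.closedBall x₀ l) (hBpos : 0 < volume B)
    (S : AffineSubspace ℝ (EuclideanSpace ℝ (Fin d)))
    (hSne : (S : Set (EuclideanSpace ℝ (Fin d))).Nonempty)
    (hSdim : Module.finrank ℝ S.direction = n) :
    (∫ x in B, Metric.infDist x (S : Set (EuclideanSpace ℝ (Fin d))))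
        / (volume B).toReal
      ≥ ((d - n : ℝ) / (d - n + 1)) *
        ((Real.Gamma ((d - n : ℝ) / 2 + 1) * Real.Gamma ((n : ℝ) / 2 + 1)
            / Real.pi ^ ((d : ℝ) / 2)
          * l ^ (-(n : ℝ)) * (volume B).toReal) ^ ((1 : ℝ) / (d - n))) := by
  obtain ⟨p, hp⟩ := hSne
  obtain ⟨k, rfl⟩ := Nat.exists_eq_add_of_le hn.le
  have hk : ((n + k : ℕ) : ℝ) - n = k := by push_cast; ring
  have hdim : finrank ℝ S.directionᗮ = k :=
    Submodule.finrank_add_finrank_orthogonal' (by rw [hSdim, finrank_euclideanSpace_fin])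
  have hBfin : volume B ≠ ⊤ := (measure_mono hBsub |>.trans_lt measure_closedBall_lt_top).ne
  have : IsFiniteMeasure (volume.restrict B) := isFiniteMeasure_restrict.2 hBfin
  set C := unitBallVolume n * unitBallVolume k * l ^ n with hC_def
  have hC : 0 < C := by have := unitBallVolume_pos n; have := unitBallVolume_pos k; positivity
  have hsublevel (t : ℝ) (ht : 0 < t) :
      volume.restrict B {x | infDist x S ≤ t} ≤ ENNReal.ofReal (C * t ^ (k : ℝ)) := by
    rw [Measure.restrict_apply (measurableSet_le (continuous_infDist_pt _).measurable
      measurable_const), inter_comm]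
    convert volume_inter_infDist_le S hp hBsub hl.le ht.le using 2
    rw [hSdim, hdim, Real.rpow_natCast]
    ring
  have hint : IntegrableOn (infDist · S) B :=
    ((continuous_infDist_pt _).continuousOn.integrableOn_compact
      (isCompact_closedBall x₀ l)).mono_set hBsub
  have hlower := mul_le_integral_of_measure_le_mul_rpow (volume.restrict B)
    (ae_of_all _ fun _ => infDist_nonneg) hint hC (Nat.cast_pos.2 (by omega)) hsublevel
  rw [measureReal_restrict_apply_univ, measureReal_def] at hlower
  rw [hk, ge_iff_le, ← inv_unitBallVolume_mul_unitBallVolume, Real.rpow_neg hl.le,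
    Real.rpow_natCast, le_div_iff₀ (ENNReal.toReal_pos hBpos.ne' hBfin),
    show (unitBallVolume n * unitBallVolume k)⁻¹ * (l ^ n)⁻¹ * (volume B).toReal
      = (volume B).toReal / C by rw [hC_def]; ring]
  exact hlower

theorem plane_distance_lower_bound (d n : ℕ) (hn : n < d)
    (l : ℝ) (hl : 0 < l) (x₀ : EuclideanSpace ℝ (Fin d))
    (B : Set (EuclideanSpace ℝ (Fin d))) (hBm : MeasurableSet B)
    (hBsub : B ⊆ Metric.closedBall x₀ l) (hBpos : 0 < volume B)
    (S : AffineSubspace ℝ (EuclideanSpace ℝ (Fin d)))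
    (hSne : (S : Set (EuclideanSpace ℝ (Fin d))).Nonempty)
    (hSdim : Module.finrank ℝ S.direction = n) :
    (∫ x in B, Metric.infDist x (S : Set (EuclideanSpace ℝ (Fin d))))
        / (volume B).toReal
      ≥ ((d - n : ℝ) / (d - n + 1)) *
        ((Real.Gamma ((d - n : ℝ) / 2 + 1) * Real.Gamma ((n : ℝ) / 2 + 1)
            / Real.pi ^ ((d : ℝ) / 2)
          * l ^ (-(n : ℝ)) * (volume B).toReal) ^ ((1 : ℝ) / (d - n))) :=
  plane_distance_lower_bound_general d n hn l hl x₀ B hBsub hBpos S hSne hSdim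
end

section
/- For two probability distributions μ and ν on ℝ with finite first moments, their Wasserstein-1 distance equals ∫_ℝ |F_μ(t) − F_ν(t)| dt, where F_μ and F_ν are the cumulative distribution functions. -/
/-!
Since `|x - y|` is the length of the set of levels `t` separating `x` from `y`, Tonelli turns the
cost of a coupling `π` into `∫ π ({x ≤ t} ∆ {y ≤ t}) dt`. For each `t` the integrand is at least
`|F_μ t - F_ν t|`, the difference of the measures of the two events. Equality holds for the
coupling `u ↦ (F_μ⁻¹ u, F_ν⁻¹ u)` of the uniform measure on `(0, 1)`, under which the two events are
nested. Finite first moments make every cost finite, so the infimum of the real costs is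
attained there.
-/

open MeasureTheory

/-- Wasserstein-1 distance via couplings. -/
noncomputable def W1 {E : Type*} [MeasurableSpace E] [NormedAddCommGroup E]
    (μ ν : Measure E) : ℝ :=
  sInf {r : ℝ | ∃ π : Measure (E × E),
    IsProbabilityMeasure π ∧ π.map Prod.fst = μ ∧ π.map Prod.snd = ν ∧
    r = ∫ p, ‖p.1 - p.2‖ ∂π}

open ProbabilityTheory Set
open scoped ENNReal symmDiff

namespace Set

variable {α : Type*} [LinearOrder α]

theorem Iic_symmDiff_Iic (a b : α) : Iic a ∆ Iic b = Ioc (min a b) (max a b) := by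
  ext x
  simp only [mem_symmDiff, mem_Iic, mem_Ioc, min_lt_iff, le_max_iff, not_le]
  grind

theorem Ici_symmDiff_Ici (a b : α) : Ici a ∆ Ici b = Ico (min a b) (max a b) := by
  ext x
  simp only [mem_symmDiff, mem_Ici, mem_Ico, min_le_iff, lt_max_iff, not_le]
  grind

end Set

namespace MeasureTheory

theorem lintegral_enorm_sub_eq_lintegral_measure_symmDiff {α : Type*} [MeasurableSpace α]
    (π : Measure α) [SFinite π] {f g : α → ℝ} (hf : Measurable f) (hg : Measurable g) :
    ∫⁻ x, ‖f x - g x‖ₑ ∂π = ∫⁻ t, π ({x | f x ≤ t} ∆ {x | g x ≤ t}) := by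
  set E : Set (α × ℝ) := {p | f p.1 ≤ p.2} ∆ {p | g p.1 ≤ p.2}
  have hE : MeasurableSet E :=
    (measurableSet_le (hf.comp measurable_fst) measurable_snd).symmDiff
      (measurableSet_le (hg.comp measurable_fst) measurable_snd)
  calc ∫⁻ x, ‖f x - g x‖ₑ ∂π = ∫⁻ x, volume (Prod.mk x ⁻¹' E) ∂π := by
        refine lintegral_congr fun x => ?_
        change _ = volume (Ici (f x) ∆ Ici (g x))
        rw [Ici_symmDiff_Ici, Real.volume_Ico, max_sub_min_eq_abs', Real.enorm_eq_ofReal_abs]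
    _ = π.prod volume E := (Measure.prod_apply hE).symm
    _ = ∫⁻ t, π ({x | f x ≤ t} ∆ {x | g x ≤ t}) := Measure.prod_apply_symm hE

theorem W1_eq_toReal_of_isLeast {E : Type*} [NormedAddCommGroup E] [MeasurableSpace E]
    [BorelSpace E] [SecondCountableTopology E] {μ ν : Measure E} {D : ℝ≥0∞}
    (hD : IsLeast {c | ∃ π : Measure (E × E), IsProbabilityMeasure π ∧ π.map Prod.fst = μ ∧
      π.map Prod.snd = ν ∧ c = ∫⁻ p, ‖p.1 - p.2‖ₑ ∂π} D)
    (hfin : ∀ π : Measure (E × E), IsProbabilityMeasure π → π.map Prod.fst = μ →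
      π.map Prod.snd = ν → ∫⁻ p, ‖p.1 - p.2‖ₑ ∂π ≠ ∞) :
    W1 μ ν = D.toReal := by
  have hcost : ∀ π : Measure (E × E),
      ∫ p, ‖p.1 - p.2‖ ∂π = (∫⁻ p, ‖p.1 - p.2‖ₑ ∂π).toReal := fun π =>
    integral_norm_eq_lintegral_enorm (measurable_fst.sub measurable_snd).aestronglyMeasurable
  refine IsLeast.csInf_eq ⟨?_, ?_⟩
  · obtain ⟨π, hπ, h1, h2, hπD⟩ := hD.1
    exact ⟨π, hπ, h1, h2, by rw [hcost, hπD]⟩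
  · rintro r ⟨π, hπ, h1, h2, rfl⟩
    rw [hcost]
    exact ENNReal.toReal_mono (hfin π hπ h1 h2) (hD.2 ⟨π, hπ, h1, h2, rfl⟩)

theorem integrable_fst_sub_snd {E : Type*} [NormedAddCommGroup E] [MeasurableSpace E]
    [BorelSpace E] [SecondCountableTopology E] {μ ν : Measure E} {π : Measure (E × E)}
    (h1 : π.map Prod.fst = μ) (h2 : π.map Prod.snd = ν)
    (hμ : Integrable id μ) (hν : Integrable id ν) : Integrable (fun p : E × E => p.1 - p.2) π := by
  subst h1 h2
  exact ((integrable_map_measure aestronglyMeasurable_id measurable_fst.aemeasurable).1 hμ).sub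
    ((integrable_map_measure aestronglyMeasurable_id measurable_snd.aemeasurable).1 hν)

end MeasureTheory

namespace ProbabilityTheory

/-- Generalized inverse of `cdf μ`, meaningful only on `(0, 1)`: for `u ≤ 0` the set is all of `ℝ`,
for `u ≥ 1` it may be empty, and `sInf` then returns `0`. -/
noncomputable def quantile (μ : Measure ℝ) (u : ℝ) : ℝ := sInf {x | u ≤ cdf μ x}

section Quantile

variable {μ : Measure ℝ} {u t : ℝ}

lemma nonempty_setOf_le_cdf (hu : u < 1) : {x | u ≤ cdf μ x}.Nonempty :=
  ((tendsto_cdf_atTop μ).eventually (eventually_gt_nhds hu)).exists.imp fun _ => le_of_lt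

lemma bddBelow_setOf_le_cdf (hu : 0 < u) : BddBelow {x | u ≤ cdf μ x} := by
  obtain ⟨x₀, hx₀⟩ := ((tendsto_cdf_atBot μ).eventually (eventually_lt_nhds hu)).exists
  exact ⟨x₀, fun y hy => le_of_not_ge fun hyx => (hy.trans (monotone_cdf μ hyx)).not_gt hx₀⟩

/-- Right continuity of `cdf μ` makes the infimum attained. -/
lemma le_cdf_quantile (hu : u ∈ Ioo 0 1) : u ≤ cdf μ (quantile μ u) := by
  refine ge_of_tendsto (((cdf μ).right_continuous _).tendsto.mono_left
    (nhdsWithin_mono _ Ioi_subset_Ici_self)) ?_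
  filter_upwards [self_mem_nhdsWithin] with x hx
  obtain ⟨y, hy, hyx⟩ := exists_lt_of_csInf_lt (nonempty_setOf_le_cdf hu.2) hx
  exact hy.trans (monotone_cdf μ hyx.le)

lemma quantile_le_iff (hu : u ∈ Ioo 0 1) : quantile μ u ≤ t ↔ u ≤ cdf μ t :=
  ⟨fun h => (le_cdf_quantile hu).trans (monotone_cdf μ h),
    fun h => csInf_le (bddBelow_setOf_le_cdf hu.1) h⟩

lemma monotoneOn_quantile : MonotoneOn (quantile μ) (Ioo 0 1) := fun _ hu _ hv huv =>
  (quantile_le_iff hu).2 (huv.trans ((quantile_le_iff hv).1 le_rfl))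

lemma aemeasurable_quantile : AEMeasurable (quantile μ) (volume.restrict (Ioo 0 1)) :=
  aemeasurable_restrict_of_monotoneOn measurableSet_Ioo monotoneOn_quantile

lemma quantile_preimage_Iic_inter_Ioo :
    quantile μ ⁻¹' Iic t ∩ Ioo 0 1 = Iic (cdf μ t) ∩ Ioo 0 1 := by
  ext u
  exact and_congr_left quantile_le_iff

end Quantile

instance : IsProbabilityMeasure (volume.restrict (Ioo (0 : ℝ) 1)) := ⟨by simp⟩

lemma volume_restrict_Ioo_zero_one_Ioc {a b : ℝ} (ha : 0 ≤ a) (hb : b ≤ 1) :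
    volume.restrict (Ioo (0 : ℝ) 1) (Ioc a b) = ENNReal.ofReal (b - a) := by
  rw [Measure.restrict_congr_set Ioo_ae_eq_Ioc, Measure.restrict_apply measurableSet_Ioc,
    Ioc_inter_Ioc, max_eq_left ha, min_eq_left hb, Real.volume_Ioc]

lemma volume_restrict_Ioo_zero_one_Iic {c : ℝ} (hc : c ≤ 1) :
    volume.restrict (Ioo (0 : ℝ) 1) (Iic c) = ENNReal.ofReal c := by
  rw [Measure.restrict_congr_set Ioo_ae_eq_Ioc, Measure.restrict_apply measurableSet_Iic,
    inter_comm, Ioc_inter_Iic, inf_eq_right.2 hc, Real.volume_Ioc, sub_zero]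

theorem map_quantile (μ : Measure ℝ) [IsProbabilityMeasure μ] :
    (volume.restrict (Ioo 0 1)).map (quantile μ) = μ := by
  refine Measure.ext_of_Iic _ _ fun t => ?_
  rw [Measure.map_apply_of_aemeasurable aemeasurable_quantile measurableSet_Iic,
    Measure.restrict_apply' measurableSet_Ioo, quantile_preimage_Iic_inter_Ioo,
    ← Measure.restrict_apply' measurableSet_Ioo,
    volume_restrict_Ioo_zero_one_Iic (cdf_le_one μ t), ofReal_cdf]

noncomputable def quantileCoupling (μ ν : Measure ℝ) : Measure (ℝ × ℝ) :=
  (volume.restrict (Ioo 0 1)).map fun u => (quantile μ u, quantile ν u)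

section Coupling

variable {μ ν : Measure ℝ}

lemma aemeasurable_quantile_prod :
    AEMeasurable (fun u => (quantile μ u, quantile ν u)) (volume.restrict (Ioo 0 1)) :=
  aemeasurable_quantile.prodMk aemeasurable_quantile

instance : IsProbabilityMeasure (quantileCoupling μ ν) :=
  Measure.isProbabilityMeasure_map aemeasurable_quantile_prod

lemma quantileCoupling_symmDiff (t : ℝ) :
    quantileCoupling μ ν ({p | p.1 ≤ t} ∆ {p | p.2 ≤ t}) = ‖cdf μ t - cdf ν t‖ₑ := by
  have hmeas : MeasurableSet ({p : ℝ × ℝ | p.1 ≤ t} ∆ {p | p.2 ≤ t}) :=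
    (measurableSet_le measurable_fst measurable_const).symmDiff
      (measurableSet_le measurable_snd measurable_const)
  rw [quantileCoupling, Measure.map_apply_of_aemeasurable aemeasurable_quantile_prod hmeas,
    Measure.restrict_apply' measurableSet_Ioo, preimage_symmDiff, inter_symmDiff_distrib_right]
  change volume ((quantile μ ⁻¹' Iic t ∩ Ioo 0 1) ∆ (quantile ν ⁻¹' Iic t ∩ Ioo 0 1)) = _
  rw [quantile_preimage_Iic_inter_Ioo, quantile_preimage_Iic_inter_Ioo,
    ← inter_symmDiff_distrib_right, ← Measure.restrict_apply' measurableSet_Ioo,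
    Iic_symmDiff_Iic, volume_restrict_Ioo_zero_one_Ioc (le_min (cdf_nonneg μ t) (cdf_nonneg ν t))
      (max_le (cdf_le_one μ t) (cdf_le_one ν t)), max_sub_min_eq_abs', Real.enorm_eq_ofReal_abs]

lemma lintegral_enorm_sub_quantileCoupling :
    ∫⁻ p, ‖p.1 - p.2‖ₑ ∂quantileCoupling μ ν = ∫⁻ t, ‖cdf μ t - cdf ν t‖ₑ := by
  rw [lintegral_enorm_sub_eq_lintegral_measure_symmDiff _ measurable_fst measurable_snd]
  exact lintegral_congr quantileCoupling_symmDiff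

lemma quantileCoupling_map_fst [IsProbabilityMeasure μ] :
    (quantileCoupling μ ν).map Prod.fst = μ := by
  rw [quantileCoupling, AEMeasurable.map_map_of_aemeasurable measurable_fst.aemeasurable
    aemeasurable_quantile_prod]
  exact map_quantile μ

lemma quantileCoupling_map_snd [IsProbabilityMeasure ν] :
    (quantileCoupling μ ν).map Prod.snd = ν := by
  rw [quantileCoupling, AEMeasurable.map_map_of_aemeasurable measurable_snd.aemeasurable
    aemeasurable_quantile_prod]
  exact map_quantile ν

variable [IsProbabilityMeasure μ] [IsProbabilityMeasure ν]

lemma lintegral_enorm_cdf_sub_le (π : Measure (ℝ × ℝ)) [IsFiniteMeasure π]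
    (h1 : π.map Prod.fst = μ) (h2 : π.map Prod.snd = ν) :
    ∫⁻ t, ‖cdf μ t - cdf ν t‖ₑ ≤ ∫⁻ p, ‖p.1 - p.2‖ₑ ∂π := by
  rw [lintegral_enorm_sub_eq_lintegral_measure_symmDiff _ measurable_fst measurable_snd]
  refine lintegral_mono fun t => ?_
  have hμ : cdf μ t = π.real {p | p.1 ≤ t} := by
    rw [cdf_eq_real, ← h1, map_measureReal_apply measurable_fst measurableSet_Iic]; rfl
  have hν : cdf ν t = π.real {p | p.2 ≤ t} := by
    rw [cdf_eq_real, ← h2, map_measureReal_apply measurable_snd measurableSet_Iic]; rfl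
  rw [hμ, hν, Real.enorm_eq_ofReal_abs, ← ofReal_measureReal]
  exact ENNReal.ofReal_le_ofReal (abs_measureReal_sub_le_measureReal_symmDiff
    (measurableSet_le measurable_fst measurable_const).nullMeasurableSet
    (measurableSet_le measurable_snd measurable_const).nullMeasurableSet)

end Coupling

end ProbabilityTheory

theorem wasserstein_eq_integral_cdf_diff (μ ν : Measure ℝ)
    [IsProbabilityMeasure μ] [IsProbabilityMeasure ν]
    (hμ : Integrable id μ) (hν : Integrable id ν) :
    W1 μ ν = ∫ t, |(μ (Set.Iic t)).toReal - (ν (Set.Iic t)).toReal| := by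
  have hcdf : ∀ t, |(μ (Iic t)).toReal - (ν (Iic t)).toReal| = ‖cdf μ t - cdf ν t‖ := fun t => by
    rw [cdf_eq_real, cdf_eq_real, Real.norm_eq_abs, measureReal_def, measureReal_def]
  simp_rw [hcdf]
  have hmeas : Measurable fun t => cdf μ t - cdf ν t :=
    (monotone_cdf μ).measurable.sub (monotone_cdf ν).measurable
  rw [integral_norm_eq_lintegral_enorm hmeas.aestronglyMeasurable]
  refine W1_eq_toReal_of_isLeast ⟨⟨quantileCoupling μ ν, inferInstance, quantileCoupling_map_fst,
    quantileCoupling_map_snd, lintegral_enorm_sub_quantileCoupling.symm⟩, ?_⟩ fun π _ h1 h2 => ?_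
  · rintro _ ⟨π, _, h1, h2, rfl⟩
    exact lintegral_enorm_cdf_sub_le π h1 h2
  · exact (integrable_fst_sub_snd h1 h2 hμ hν).hasFiniteIntegral.ne
end

section
/- Let f : [0,1] → ℝ be piecewise affine with N_A pieces. Then the cumulative distribution function of the pushforward f#U([0,1]) of the uniform distribution on [0,1] is a piecewise affine function with at most N_A + 2 affine pieces. -/
/-!
The CDF at `t` is the sum, over the pieces `[aᵢ, aᵢ₊₁)`, of the length of
`{x | pᵢ x + qᵢ ≤ t}` inside the piece. This length is affine in `t` as long as `t` stays on
the same side of both endpoint values `f aᵢ` and `f aᵢ₊₁`. The `NA + 1` values `f aᵢ` cut `ℝ`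
into at most `NA + 2` intervals on which this holds for every piece at once; we index them by
the number of values `f aᵢ ≤ t`.
-/

open MeasureTheory Set Finset

section SublevelCount

variable {ι β : Type*} [Fintype ι] [LinearOrder β]

def sublevelCount (v : ι → β) (t : β) : ℕ :=
  #{i | v i ≤ t}

theorem sublevelCount_le_card (v : ι → β) (t : β) : sublevelCount v t ≤ Fintype.card ι :=
  card_filter_le _ _

theorem filter_le_subset_filter_le (v : ι → β) {s t : β} (hst : s ≤ t) :
    ({i | v i ≤ s} : Finset ι) ⊆ ({i | v i ≤ t} : Finset ι) :=
  monotone_filter_right _ fun _ _ hi => le_trans hi hst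

theorem monotone_sublevelCount (v : ι → β) : Monotone (sublevelCount v) :=
  fun _ _ hst => card_le_card (filter_le_subset_filter_le v hst)

theorem le_iff_le_of_le_of_sublevelCount_eq {v : ι → β} {s t : β} (hst : s ≤ t)
    (h : sublevelCount v s = sublevelCount v t) (i : ι) : v i ≤ s ↔ v i ≤ t := by
  have heq := eq_of_subset_of_card_le (filter_le_subset_filter_le v hst) h.ge
  simpa using Finset.ext_iff.mp heq i

theorem le_iff_le_of_sublevelCount_eq {v : ι → β} {s t : β}
    (h : sublevelCount v s = sublevelCount v t) (i : ι) : v i ≤ s ↔ v i ≤ t := by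
  rcases le_total s t with hst | hts
  · exact le_iff_le_of_le_of_sublevelCount_eq hst h i
  · exact (le_iff_le_of_le_of_sublevelCount_eq hts h.symm i).symm

end SublevelCount

def AffineOn (g : ℝ → ℝ) (S : Set ℝ) : Prop :=
  ∃ p q : ℝ, ∀ t ∈ S, g t = p * t + q

theorem affineOn_empty (g : ℝ → ℝ) : AffineOn g ∅ :=
  ⟨0, 0, fun _ => False.elim⟩

namespace AffineOn

theorem mono {g : ℝ → ℝ} {S T : Set ℝ} (hg : AffineOn g T) (hST : S ⊆ T) : AffineOn g S :=
  let ⟨p, q, h⟩ := hg; ⟨p, q, fun t ht => h t (hST ht)⟩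

theorem sum {ι : Type*} {s : Finset ι} {g : ι → ℝ → ℝ} {S : Set ℝ}
    (hg : ∀ i ∈ s, AffineOn (g i) S) : AffineOn (fun t => ∑ i ∈ s, g i t) S := by
  choose! p q h using hg
  exact ⟨∑ i ∈ s, p i, ∑ i ∈ s, q i, fun t ht => by
    rw [Finset.sum_mul, ← Finset.sum_add_distrib]
    exact Finset.sum_congr rfl fun i hi => h i hi t ht⟩

end AffineOn

section AffineSublevel

variable {p q t u v : ℝ}

theorem setOf_affine_le_inter_Ico_of_le_of_le (hu : p * u + q ≤ t) (hv : p * v + q ≤ t) :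
    {x | p * x + q ≤ t} ∩ Ico u v = Ico u v :=
  inter_eq_right.2 fun x ⟨hux, hxv⟩ => by
    change p * x + q ≤ t
    rcases le_total p 0 with hp | hp
    · nlinarith [mul_nonpos_of_nonpos_of_nonneg hp (sub_nonneg.2 hux)]
    · nlinarith [mul_nonneg hp (sub_nonneg.2 hxv.le)]

theorem setOf_affine_le_inter_Ico_of_lt_of_lt (hu : t < p * u + q) (hv : t < p * v + q) :
    {x | p * x + q ≤ t} ∩ Ico u v = ∅ :=
  eq_empty_of_forall_notMem fun x ⟨hx, hux, hxv⟩ => by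
    change p * x + q ≤ t at hx
    rcases le_total p 0 with hp | hp
    · nlinarith [mul_nonpos_of_nonpos_of_nonneg hp (sub_nonneg.2 hxv.le)]
    · nlinarith [mul_nonneg hp (sub_nonneg.2 hux)]

theorem setOf_affine_le_inter_Ico_of_pos (hp : 0 < p) (hv : t < p * v + q) :
    {x | p * x + q ≤ t} ∩ Ico u v = Icc u ((t - q) / p) := by
  ext x
  simp only [mem_inter_iff, mem_ofPred_eq, Set.mem_Ico, Set.mem_Icc, le_div_iff₀ hp]
  constructor
  · rintro ⟨hx, hux, -⟩
    exact ⟨hux, by linarith⟩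
  · rintro ⟨hux, hx⟩
    exact ⟨by linarith, hux, by nlinarith⟩

theorem setOf_affine_le_inter_Ico_of_neg (hp : p < 0) (hu : t < p * u + q) :
    {x | p * x + q ≤ t} ∩ Ico u v = Ico ((t - q) / p) v := by
  ext x
  simp only [mem_inter_iff, mem_ofPred_eq, Set.mem_Ico, div_le_iff_of_neg hp]
  constructor
  · rintro ⟨hx, -, hxv⟩
    exact ⟨by linarith, hxv⟩
  · rintro ⟨hx, hxv⟩
    exact ⟨by linarith, by nlinarith, hxv⟩

/-- In the two mixed cases, the sign of `p` is forced and `(t - q) / p` is the crossing point. -/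
theorem affineOn_volume_setOf_affine_le_inter_Ico (p q : ℝ) (huv : u ≤ v) (t₀ : ℝ) :
    AffineOn (fun t => (volume ({x | p * x + q ≤ t} ∩ Ico u v)).toReal)
      {t | (p * u + q ≤ t ↔ p * u + q ≤ t₀) ∧ (p * v + q ≤ t ↔ p * v + q ≤ t₀)} := by
  by_cases hu : p * u + q ≤ t₀ <;> by_cases hv : p * v + q ≤ t₀
  · refine ⟨0, v - u, fun t ht => ?_⟩
    dsimp only
    rw [setOf_affine_le_inter_Ico_of_le_of_le (ht.1.2 hu) (ht.2.2 hv), Real.volume_Ico,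
      ENNReal.toReal_ofReal (sub_nonneg.2 huv)]
    ring
  · have hp : 0 < p := by nlinarith
    refine ⟨1 / p, -q / p - u, fun t ht => ?_⟩
    dsimp only
    have hut : p * u + q ≤ t := ht.1.2 hu
    rw [setOf_affine_le_inter_Ico_of_pos hp (not_le.1 (mt ht.2.1 hv)), Real.volume_Icc,
      ENNReal.toReal_ofReal (sub_nonneg.2 ((le_div_iff₀ hp).2 (by linarith)))]
    ring
  · have hp : p < 0 := by nlinarith
    refine ⟨-1 / p, v + q / p, fun t ht => ?_⟩
    dsimp only
    have hvt : p * v + q ≤ t := ht.2.2 hv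
    rw [setOf_affine_le_inter_Ico_of_neg hp (not_le.1 (mt ht.1.1 hu)), Real.volume_Ico,
      ENNReal.toReal_ofReal (sub_nonneg.2 ((div_le_iff_of_neg hp).2 (by linarith)))]
    ring
  · refine ⟨0, 0, fun t ht => ?_⟩
    dsimp only
    rw [setOf_affine_le_inter_Ico_of_lt_of_lt (not_le.1 (mt ht.1.1 hu))
      (not_le.1 (mt ht.2.1 hv))]
    simp

end AffineSublevel

theorem measure_inter_Ico_eq_sum {α : Type*} [LinearOrder α] [TopologicalSpace α]
    [OrderClosedTopology α] [MeasurableSpace α] [OpensMeasurableSpace α] (μ : Measure α)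
    {S : Set α} (hS : MeasurableSet S) :
    ∀ {n : ℕ} {a : Fin (n + 1) → α}, Monotone a →
      μ (S ∩ Ico (a 0) (a (Fin.last n))) = ∑ i : Fin n, μ (S ∩ Ico (a i.castSucc) (a i.succ))
  | 0, a, _ => by simp
  | n + 1, a, ha => by
    have ih := measure_inter_Ico_eq_sum μ hS (ha.comp Fin.strictMono_castSucc.monotone)
    simp only [Function.comp_apply, Fin.castSucc_zero, ← Fin.succ_castSucc] at ih
    rw [Fin.sum_univ_castSucc, ← ih, ← Fin.succ_last,
      ← measure_union _ (hS.inter measurableSet_Ico), ← inter_union_distrib_left,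
      Ico_union_Ico_eq_Ico (ha (Fin.zero_le _)) (ha (Fin.castSucc_le_succ _))]
    exact Ico_disjoint_Ico_same.mono inter_subset_right inter_subset_right

theorem measure_preimage_inter_Icc_eq_sum_of_piecewise_affine (μ : Measure ℝ)
    [NullSingletonClass μ] {f : ℝ → ℝ} {n : ℕ} {a : Fin (n + 1) → ℝ} (ha : Monotone a) {P Q : Fin n → ℝ}
    (hPQ : ∀ i, ∀ x ∈ Ico (a i.castSucc) (a i.succ), f x = P i * x + Q i)
    {B : Set ℝ} (hB : MeasurableSet (f ⁻¹' B)) :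
    μ (f ⁻¹' B ∩ Icc (a 0) (a (Fin.last n)))
      = ∑ i, μ ({x | P i * x + Q i ∈ B} ∩ Ico (a i.castSucc) (a i.succ)) := by
  rw [← measure_congr ((Filter.EventuallyEq.refl _ _).inter Ico_ae_eq_Icc),
    measure_inter_Ico_eq_sum μ hB ha]
  refine sum_congr rfl fun i _ => congrArg μ ?_
  ext x
  exact and_congr_left fun hx => by rw [Set.mem_preimage, hPQ i x hx]; rfl

theorem pushforward_cdf_piecewise_affine_general (NA : ℕ)
    (f : ℝ → ℝ) (hf : Measurable f)
    (a : Fin (NA + 1) → ℝ) (ha : Monotone a)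
    (h0 : a 0 = 0) (h1 : a (Fin.last NA) = 1)
    (haff : ∀ i : Fin NA, ∃ p q : ℝ,
      ∀ x ∈ Set.Icc (a i.castSucc) (a i.succ), f x = p * x + q) :
    ∃ pieces : Fin (NA + 2) → Set ℝ,
      (⋃ i, pieces i) = Set.univ ∧
      (∀ i, (pieces i).OrdConnected) ∧
      (∀ i, ∃ p q : ℝ, ∀ t ∈ pieces i,
        (((volume.restrict (Set.Icc (0 : ℝ) 1)).map f) (Set.Iic t)).toReal
          = p * t + q) := by
  choose P Q hPQ using haff
  have hcdf (t : ℝ) : (((volume.restrict (Icc (0 : ℝ) 1)).map f) (Iic t)).toReal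
      = ∑ i, (volume ({x | P i * x + Q i ≤ t} ∩ Ico (a i.castSucc) (a i.succ))).toReal := by
    rw [Measure.map_apply hf measurableSet_Iic, Measure.restrict_apply (hf measurableSet_Iic),
      ← h0, ← h1, measure_preimage_inter_Icc_eq_sum_of_piecewise_affine volume ha
        (fun i x hx => hPQ i x (Ico_subset_Icc_self hx)) (hf measurableSet_Iic),
      ENNReal.toReal_sum fun i _ => ((measure_mono inter_subset_right).trans_lt
        measure_Ico_lt_top).ne]
    rfl
  set cnt := sublevelCount fun i => f (a i)
  refine ⟨fun j => cnt ⁻¹' {(j : ℕ)}, ?_,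
    fun j => ordConnected_singleton.preimage_mono (monotone_sublevelCount _), fun j => ?_⟩
  · refine eq_univ_of_forall fun t => mem_iUnion.2 ⟨⟨cnt t, ?_⟩, rfl⟩
    simpa [Nat.lt_succ_iff] using sublevelCount_le_card (fun i => f (a i)) t
  show AffineOn (fun t => _) _
  simp only [hcdf]
  rcases (cnt ⁻¹' {(j : ℕ)}).eq_empty_or_nonempty with hj | ⟨t₀, ht₀⟩
  · exact hj ▸ affineOn_empty _
  refine AffineOn.sum fun i _ => (affineOn_volume_setOf_affine_le_inter_Ico (P i) (Q i)
    (ha (Fin.castSucc_le_succ i)) t₀).mono fun t ht => ?_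
  have hside := le_iff_le_of_sublevelCount_eq (ht.trans ht₀.symm)
  rw [← hPQ i _ (left_mem_Icc.2 (ha (Fin.castSucc_le_succ i))),
    ← hPQ i _ (right_mem_Icc.2 (ha (Fin.castSucc_le_succ i)))]
  exact ⟨hside i.castSucc, hside i.succ⟩

theorem pushforward_cdf_piecewise_affine (NA : ℕ) (hNA : 0 < NA)
    (f : ℝ → ℝ) (hf : Measurable f)
    (a : Fin (NA + 1) → ℝ) (ha : Monotone a)
    (h0 : a 0 = 0) (h1 : a (Fin.last NA) = 1)
    (haff : ∀ i : Fin NA, ∃ p q : ℝ,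
      ∀ x ∈ Set.Icc (a i.castSucc) (a i.succ), f x = p * x + q) :
    ∃ pieces : Fin (NA + 2) → Set ℝ,
      (⋃ i, pieces i) = Set.univ ∧
      (∀ i, (pieces i).OrdConnected) ∧
      (∀ i, ∃ p q : ℝ, ∀ t ∈ pieces i,
        (((volume.restrict (Set.Icc (0 : ℝ) 1)).map f) (Set.Iic t)).toReal
          = p * t + q) :=
  pushforward_cdf_piecewise_affine_general NA f hf a ha h0 h1 haff
end
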